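/- Let q be an odd prime power, let A_1,…,A_m, B_1,…,B_m be multiplicative characters of F_q^*, and let λ ∈ F_q. Then _mF_m(A_1^2,…,A_m^2; B_1^2,…,B_m^2 | λ)_q + _mF_m(A_1^2,…,A_m^2; B_1^2,…,B_m^2 | −λ)_q = _{2m}F_{2m}(A_1, φA_1, A_2, φA_2, …, A_m, φA_m; B_1, φB_1, B_2, φB_2, …, B_m, φB_m | λ^2)_q. -/

import Mathlib

/-!
Pair each parameter `A` with `φ A`. The Hasse–Davenport relation
`ψ(4) g(ψ) g(φψ) = g(ψ²) g(φ)` turns the product of the Gauss sum quotients of `A` and `φ A`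
at `χ` into `χ(4)⁻¹` times the quotient of `A²` at `χ²`. The factors `χ(4)^{∓1}` coming from
upper and lower parameters cancel, so the `χ`-summand of the `2m`-parameter function at `λ²` is
the `χ²`-summand of the `m`-parameter function at `λ`. Since the character group is cyclic,
squaring is two-to-one (with kernel `{1, φ}`) onto the even characters, while at an odd
character the summands at `λ` and `-λ` cancel. Summing over `χ` gives the identity.
-/

/-- The finite field hypergeometric function `ₘFₘ` of McCarthy, with upper parameters `A`,
lower parameters `B` (indexed by a finite type `ι`), and argument `lam`. -/
noncomputable def ffHyp {F : Type} [Field F] [Fintype F] (θ : AddChar F ℂ)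
    {ι : Type} [Fintype ι] (A B : ι → MulChar F ℂ) (lam : F) : ℂ :=
  letI : Fintype (MulChar F ℂ) := Fintype.ofFinite _
  (-1 : ℂ) / ((Fintype.card F : ℂ) - 1) *
    ∑ χ : MulChar F ℂ,
      (∏ i, (gaussSum (A i * χ) θ / gaussSum (A i) θ) *
        (gaussSum ((B i * χ)⁻¹) θ / gaussSum ((B i)⁻¹) θ)) *
      χ (-1) ^ (Fintype.card ι) * χ lam

open Finset

lemma IsCyclic.eq_one_or_eq_of_sq_eq_one {G : Type*} [Group G] [Finite G] [IsCyclic G]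
    {φ τ : G} (hφ : orderOf φ = 2) (hτ : τ ^ 2 = 1) : τ = 1 ∨ τ = φ := by
  classical
  have := Fintype.ofFinite G
  by_contra! h
  have hφ1 : φ ≠ 1 := by rintro rfl; simp at hφ
  have hφ2 : φ ^ 2 = 1 := hφ ▸ pow_orderOf_eq_one φ
  have hsub : ({1, φ, τ} : Finset G) ⊆ ({a | a ^ 2 = 1} : Finset G) := by
    simp [subset_iff, hφ2, hτ]
  have := (card_le_card hsub).trans (IsCyclic.card_pow_eq_one_le two_pos)
  rw [card_insert_of_notMem (by simp [hφ1.symm, h.1.symm]), card_pair h.2.symm] at this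
  omega

lemma sum_comp_eq_sum_card_fiber_mul {α β R : Type*} [Fintype α] [Fintype β] [DecidableEq β]
    [NonAssocSemiring R] (g : α → β) (f : β → R) :
    ∑ a, f (g a) = ∑ b, (#{a | g a = b} : R) * f b := by
  rw [← sum_fiberwise' univ g f]
  simp [sum_const, nsmul_eq_mul]

lemma isUnit_four_of_ringChar_ne_two {F : Type*} [Field F] (hF : ringChar F ≠ 2) :
    IsUnit (4 : F) := by
  simpa [show (4 : F) = 2 ^ 2 by norm_num] using (Ring.two_ne_zero hF).isUnit.pow 2

namespace MulChar

section NegOne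

variable {R R' : Type*} [CommRing R] [CommMonoidWithZero R']

lemma pow_apply_neg_one (χ : MulChar R R') (n : ℕ) : (χ ^ n) (-1) = χ (-1) ^ n := by
  simpa using χ.pow_apply_coe n (-1)

lemma apply_neg_one_sq (χ : MulChar R R') : χ (-1) ^ 2 = 1 := by
  rw [← map_pow, neg_one_sq, map_one]

lemma sq_apply_neg_one (χ : MulChar R R') : (χ ^ 2) (-1) = 1 := by
  rw [pow_apply_neg_one, apply_neg_one_sq]

end NegOne

variable {F : Type*} [Field F] [Fintype F]

instance instIsCyclic : IsCyclic (MulChar F ℂ) :=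
  (mulEquiv_units F ℂ).some.isCyclic.mpr inferInstance

variable (hF : ringChar F ≠ 2)
include hF

lemma exists_sq_eq_of_apply_neg_one {ψ : MulChar F ℂ} (hψ : ψ (-1) = 1) :
    ∃ χ : MulChar F ℂ, χ ^ 2 = ψ := by
  obtain ⟨ω, hω⟩ := IsCyclic.exists_monoid_generator (α := MulChar F ℂ)
  have hω_neg_one : ω (-1) = -1 := by
    refine (sq_eq_one_iff.mp ω.apply_neg_one_sq).resolve_left fun h ↦ ?_
    obtain ⟨χ, hχ⟩ := exists_apply_ne_one_of_hasEnoughRootsOfUnity F ℂ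
      (Ring.neg_one_ne_one_of_char_ne_two hF)
    obtain ⟨k, rfl⟩ := Submonoid.mem_powers_iff _ _ |>.mp (hω χ)
    rw [pow_apply_neg_one, h, one_pow] at hχ
    exact hχ rfl
  obtain ⟨k, rfl⟩ := Submonoid.mem_powers_iff _ _ |>.mp (hω ψ)
  rw [pow_apply_neg_one, hω_neg_one, neg_one_pow_eq_one_iff_even (by norm_num)] at hψ
  obtain ⟨j, rfl⟩ := hψ
  exact ⟨ω ^ j, by rw [← pow_mul, mul_two]⟩

variable {φ : MulChar F ℂ} (hφ : orderOf φ = 2)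
include hφ

lemma card_sq_eq_one_add_apply_neg_one [Fintype (MulChar F ℂ)] [DecidableEq (MulChar F ℂ)]
    (ψ : MulChar F ℂ) : (#{χ | χ ^ 2 = ψ} : ℂ) = 1 + ψ (-1) := by
  rcases sq_eq_one_iff.mp ψ.apply_neg_one_sq with hψ | hψ
  · obtain ⟨χ₀, rfl⟩ := exists_sq_eq_of_apply_neg_one hF hψ
    have hφ1 : φ ≠ 1 := by rintro rfl; simp at hφ
    have : ({χ | χ ^ 2 = χ₀ ^ 2} : Finset _) = {χ₀, φ * χ₀} := by
      ext χ
      simp only [mem_filter, mem_univ, true_and, mem_insert, mem_singleton]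
      constructor
      · intro h
        rcases IsCyclic.eq_one_or_eq_of_sq_eq_one hφ (τ := χ * χ₀⁻¹)
          (by rw [mul_pow, h, inv_pow, mul_inv_cancel]) with h' | h'
        · exact Or.inl (mul_inv_eq_one.mp h')
        · exact Or.inr (by rw [← h', inv_mul_cancel_right])
      · rintro (rfl | rfl)
        · rfl
        · rw [mul_pow, ← hφ, pow_orderOf_eq_one, one_mul]
    rw [this, card_pair (by simpa using hφ1), hψ]
    norm_num
  · have : ({χ | χ ^ 2 = ψ} : Finset _) = ∅ := by
      refine filter_false_of_mem fun χ _ h ↦ ?_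
      have := χ.sq_apply_neg_one
      rw [h, hψ] at this
      norm_num at this
    simp [this, hψ]

lemma sum_comp_sq [Fintype (MulChar F ℂ)] (f : MulChar F ℂ → ℂ) :
    ∑ χ, f (χ ^ 2) = ∑ ψ, (1 + ψ (-1)) * f ψ := by
  classical
  simp only [sum_comp_eq_sum_card_fiber_mul, card_sq_eq_one_add_apply_neg_one hF hφ]

lemma eq_ringHomComp_quadraticChar [DecidableEq F] :
    φ = (quadraticChar F).ringHomComp (Int.castRingHom ℂ) := by
  have hsq := ((quadraticChar_isQuadratic F).comp (Int.castRingHom ℂ)).sq_eq_one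
  have hne : (quadraticChar F).ringHomComp (Int.castRingHom ℂ) ≠ 1 :=
    (ringHomComp_ne_one_iff Int.cast_injective).mpr (quadraticChar_ne_one hF)
  exact ((IsCyclic.eq_one_or_eq_of_sq_eq_one hφ hsq).resolve_left hne).symm

end MulChar

section GaussSum

lemma gaussSum_ne_zero {F : Type*} [Field F] [Fintype F] {θ : AddChar F ℂ} (hθ : θ ≠ 1)
    (χ : MulChar F ℂ) : gaussSum χ θ ≠ 0 := by
  rcases eq_or_ne χ 1 with rfl | hχ
  · simp [gaussSum_one_left hθ]
  · exact gaussSum_ne_zero_of_nontrivial (by simp) hχ (AddChar.IsPrimitive.of_ne_one hθ)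

variable {F : Type*} [Field F] [Fintype F] (hF : ringChar F ≠ 2)
  {φ : MulChar F ℂ} (hφ : orderOf φ = 2)
include hF hφ

lemma card_sq_eq_one_add [DecidableEq F] (t : F) : (#{u : F | u ^ 2 = t} : ℂ) = 1 + φ t := by
  have := congrArg (Int.cast : ℤ → ℂ) (quadraticChar_card_sqrts hF t)
  rw [MulChar.eq_ringHomComp_quadraticChar hF hφ]
  simpa [add_comm] using this

lemma apply_four_mul_jacobiSum_self {ψ : MulChar F ℂ} (hψ : ψ ≠ 1) :
    ψ 4 * jacobiSum ψ ψ = jacobiSum φ ψ := by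
  classical
  have h2 : (2 : F) ≠ 0 := Ring.two_ne_zero hF
  calc ψ 4 * jacobiSum ψ ψ = ∑ x : F, ψ (4 * (x * (1 - x))) := by
        simp only [jacobiSum, mul_sum, map_mul]
    -- substitute `x = (1 - u) / 2`
    _ = ∑ u : F, ψ (1 - u ^ 2) := by
        refine (Fintype.sum_equiv ((Equiv.subLeft 1).trans (Equiv.divRight₀ 2 h2)) _ _
          fun u ↦ ?_).symm
        simp only [Equiv.trans_apply, Equiv.subLeft_apply, Equiv.divRight₀_apply]
        congr 1
        field_simp
        ring
    _ = ∑ t : F, (1 + φ t) * ψ (1 - t) := by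
        simp only [sum_comp_eq_sum_card_fiber_mul (· ^ 2) (fun t ↦ ψ (1 - t)),
          card_sq_eq_one_add hF hφ]
    _ = jacobiSum φ ψ := by
        have : ∑ t : F, ψ (1 - t) = 0 := by
          rw [Fintype.sum_equiv (Equiv.subLeft 1) (fun t ↦ ψ (1 - t)) ψ fun _ ↦ rfl]
          exact MulChar.sum_eq_zero_of_ne_one hψ
        simp only [add_mul, one_mul, sum_add_distrib, this, zero_add, jacobiSum]

variable {θ : AddChar F ℂ} (hθ : θ ≠ 1)
include hθ

/-- The Hasse–Davenport product formula for `n = 2`. -/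
theorem apply_four_mul_gaussSum_mul_gaussSum_mul (ψ : MulChar F ℂ) :
    ψ 4 * (gaussSum ψ θ * gaussSum (φ * ψ) θ) = gaussSum (ψ ^ 2) θ * gaussSum φ θ := by
  have hφ2 : φ ^ 2 = 1 := hφ ▸ pow_orderOf_eq_one φ
  rcases eq_or_ne ψ 1 with rfl | hψ1
  · simp [MulChar.one_apply (isUnit_four_of_ringChar_ne_two hF), gaussSum_one_left hθ]
  rcases eq_or_ne ψ φ with rfl | hψφ
  · rw [show (4 : F) = 2 ^ 2 by norm_num, map_pow, ← MulChar.pow_apply' _ two_ne_zero, ← sq,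
      hφ2, MulChar.one_apply (Ring.two_ne_zero hF).isUnit, gaussSum_one_left hθ]
    ring
  have hψψ : ψ * ψ ≠ 1 := by
    rw [← sq]
    intro h
    rcases IsCyclic.eq_one_or_eq_of_sq_eq_one hφ h with h | h <;> contradiction
  have hφψ : φ * ψ ≠ 1 := fun h ↦ hψφ <|
    (eq_inv_of_mul_eq_one_right h).trans (inv_eq_of_mul_eq_one_right (by rwa [sq] at hφ2))
  have e1 := jacobiSum_mul_nontrivial hψψ θ
  have e2 := jacobiSum_mul_nontrivial hφψ θ
  have e3 := apply_four_mul_jacobiSum_self hF hφ hψ1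
  refine mul_right_cancel₀ (gaussSum_ne_zero hθ ψ) ?_
  rw [sq]
  linear_combination -ψ 4 * gaussSum (φ * ψ) θ * e1 + gaussSum (ψ * ψ) θ * e2
    + gaussSum (ψ * ψ) θ * gaussSum (φ * ψ) θ * e3

lemma gaussSum_div_mul_gaussSum_div (C χ : MulChar F ℂ) :
    gaussSum (C * χ) θ / gaussSum C θ * (gaussSum (C * φ * χ) θ / gaussSum (C * φ) θ)
      = (χ 4)⁻¹ * (gaussSum (C ^ 2 * χ ^ 2) θ / gaussSum (C ^ 2) θ) := by
  have h4 := isUnit_four_of_ringChar_ne_two hF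
  have hC := apply_four_mul_gaussSum_mul_gaussSum_mul hF hφ hθ C
  have hCχ := apply_four_mul_gaussSum_mul_gaussSum_mul hF hφ hθ (C * χ)
  rw [mul_comm φ C] at hC
  rw [mul_left_comm φ C χ, ← mul_assoc C φ χ, MulChar.mul_apply, mul_pow] at hCχ
  have := (h4.map χ).ne_zero
  have := gaussSum_ne_zero hθ C
  have := gaussSum_ne_zero hθ (C * φ)
  have := gaussSum_ne_zero hθ (C ^ 2)
  field_simp
  refine mul_left_cancel₀ (h4.map C).ne_zero ?_
  linear_combination gaussSum (C ^ 2) θ * hCχ - gaussSum (C ^ 2 * χ ^ 2) θ * hC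

end GaussSum

section Hypergeometric

variable {F : Type} [Field F] [Fintype F] (θ : AddChar F ℂ)

noncomputable def ffHypFactor (A B χ : MulChar F ℂ) : ℂ :=
  gaussSum (A * χ) θ / gaussSum A θ * (gaussSum ((B * χ)⁻¹) θ / gaussSum B⁻¹ θ)

noncomputable def ffHypSummand {ι : Type} [Fintype ι] (A B : ι → MulChar F ℂ) (lam : F)
    (χ : MulChar F ℂ) : ℂ :=
  (∏ i, ffHypFactor θ (A i) (B i) χ) * χ (-1) ^ Fintype.card ι * χ lam

lemma ffHyp_eq_sum [Fintype (MulChar F ℂ)] {ι : Type} [Fintype ι] (A B : ι → MulChar F ℂ)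
    (lam : F) :
    ffHyp θ A B lam = -1 / ((Fintype.card F : ℂ) - 1) * ∑ χ, ffHypSummand θ A B lam χ := by
  rw [ffHyp]
  congr!

lemma ffHypSummand_neg {ι : Type} [Fintype ι] (A B : ι → MulChar F ℂ) (lam : F)
    (χ : MulChar F ℂ) : ffHypSummand θ A B (-lam) χ = χ (-1) * ffHypSummand θ A B lam χ := by
  rw [ffHypSummand, ffHypSummand, ← neg_one_mul lam, map_mul]
  ring

variable {θ} (hF : ringChar F ≠ 2) {φ : MulChar F ℂ} (hφ : orderOf φ = 2) (hθ : θ ≠ 1)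
include hF hφ hθ

lemma ffHypFactor_mul_ffHypFactor_mul (A B χ : MulChar F ℂ) :
    ffHypFactor θ A B χ * ffHypFactor θ (A * φ) (B * φ) χ
      = ffHypFactor θ (A ^ 2) (B ^ 2) (χ ^ 2) := by
  have hφ_inv : φ⁻¹ = φ := inv_eq_of_mul_eq_one_right (by rw [← sq, ← hφ, pow_orderOf_eq_one])
  have hA := gaussSum_div_mul_gaussSum_div hF hφ hθ A χ
  have hB := gaussSum_div_mul_gaussSum_div hF hφ hθ B⁻¹ χ⁻¹
  rw [MulChar.inv_apply_eq_inv', inv_inv] at hB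
  have := ((isUnit_four_of_ringChar_ne_two hF).map χ).ne_zero
  simp only [ffHypFactor, mul_inv, hφ_inv, inv_pow] at hB ⊢
  rw [mul_mul_mul_comm, hA, hB]
  field_simp

lemma ffHypSummand_prod_fin_two {ι : Type} [Fintype ι] (A B : ι → MulChar F ℂ) (lam : F)
    (χ : MulChar F ℂ) :
    ffHypSummand θ (fun p : ι × Fin 2 ↦ A p.1 * φ ^ (p.2 : ℕ))
        (fun p : ι × Fin 2 ↦ B p.1 * φ ^ (p.2 : ℕ)) (lam ^ 2) χ
      = ffHypSummand θ (fun i ↦ A i ^ 2) (fun i ↦ B i ^ 2) lam (χ ^ 2) := by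
  simp only [ffHypSummand, Fintype.prod_prod_type, Fin.prod_univ_two, Fin.val_zero, Fin.val_one,
    pow_zero, pow_one, mul_one, ffHypFactor_mul_ffHypFactor_mul hF hφ hθ, Fintype.card_prod,
    Fintype.card_fin, one_pow, pow_mul', MulChar.apply_neg_one_sq, map_pow,
    χ.pow_apply' two_ne_zero]

end Hypergeometric

theorem stmt3_general {F : Type} [Field F] [Fintype F] (hodd : Odd (Fintype.card F))
    (θ : AddChar F ℂ) (hθ : θ ≠ 1)
    (φ : MulChar F ℂ) (hφ : orderOf φ = 2)
    (m : ℕ) (A B : Fin m → MulChar F ℂ) (lam : F) :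
    ffHyp θ (fun i => A i ^ 2) (fun i => B i ^ 2) lam
        + ffHyp θ (fun i => A i ^ 2) (fun i => B i ^ 2) (-lam)
      = ffHyp θ (fun p : Fin m × Fin 2 => A p.1 * φ ^ (p.2 : ℕ))
          (fun p : Fin m × Fin 2 => B p.1 * φ ^ (p.2 : ℕ)) (lam ^ 2) := by
  let := Fintype.ofFinite (MulChar F ℂ)
  have hF : ringChar F ≠ 2 := by
    rw [Ne, FiniteField.even_card_iff_char_two, ← Nat.even_iff]
    exact Nat.not_even_iff_odd.mpr hodd
  simp only [ffHyp_eq_sum, ← mul_add, ← sum_add_distrib]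
  congr 1
  calc ∑ ψ, (ffHypSummand θ (fun i ↦ A i ^ 2) (fun i ↦ B i ^ 2) lam ψ
        + ffHypSummand θ (fun i ↦ A i ^ 2) (fun i ↦ B i ^ 2) (-lam) ψ)
      = ∑ ψ, (1 + ψ (-1)) * ffHypSummand θ (fun i ↦ A i ^ 2) (fun i ↦ B i ^ 2) lam ψ := by
        simp only [ffHypSummand_neg, add_mul, one_mul]
    _ = ∑ χ, ffHypSummand θ (fun i ↦ A i ^ 2) (fun i ↦ B i ^ 2) lam (χ ^ 2) :=
        (MulChar.sum_comp_sq hF hφ _).symm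
    _ = _ := by simp only [ffHypSummand_prod_fin_two hF hφ hθ]

theorem stmt3 {F : Type} [Field F] [Fintype F] (hodd : Odd (Fintype.card F))
    (θ : AddChar F ℂ) (hθ : θ ≠ 1)
    (φ : MulChar F ℂ) (hφ : orderOf φ = 2)
    (m : ℕ) (hm : 0 < m) (A B : Fin m → MulChar F ℂ) (lam : F) :
    ffHyp θ (fun i => A i ^ 2) (fun i => B i ^ 2) lam
        + ffHyp θ (fun i => A i ^ 2) (fun i => B i ^ 2) (-lam)
      = ffHyp θ (fun p : Fin m × Fin 2 => A p.1 * φ ^ (p.2 : ℕ))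
          (fun p : Fin m × Fin 2 => B p.1 * φ ^ (p.2 : ℕ)) (lam ^ 2) :=
  stmt3_general hodd θ hθ φ hφ m A B lam
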